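/- Block loss lower bound: for any feature map f with ℓ convex, the block contrastive loss L_un^block(f) = E[ ℓ( f(x) · ( (1/b)Σ_{i=1}^b f(x_i⁺) − (1/b)Σ_{i=1}^b f(x_i⁻) ) ) ] is at most the contrastive loss L_un(f) = E[ (1/b²) Σ_{i,j} ℓ( f(x) · (f(x_i⁺) − f(x_j⁻)) ) ], where x, x₁⁺,…,x_b⁺ ∼ D_{c⁺} and x₁⁻,…,x_b⁻ ∼ D_{c⁻} with (c⁺,c⁻) ∼ ρ². -/

import Mathlib

/-!
Write `n` for the block size. Since `n⁻¹ ∑ᵢ pᵢ - n⁻¹ ∑ⱼ mⱼ` is the uniform average of the `n²`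
differences `pᵢ - mⱼ`, and `w ↦ ℓ ⟪v, w⟫` is convex, Jensen's inequality for uniform weights
(applied once over `i` and once over `j`) bounds the block loss pointwise by the average pairwise
loss. Integrating against each class-conditional law and summing with the weights `ρ c⁺ ρ c⁻ ≥ 0`
preserves the inequality.
-/

open MeasureTheory

theorem ConvexOn.map_fintype_average_le {E : Type*} [AddCommGroup E] [Module ℝ E] {s : Set E}
    {g : E → ℝ} (hg : ConvexOn ℝ s g) {κ : Type*} [Fintype κ] [Nonempty κ] {x : κ → E}
    (hx : ∀ k, x k ∈ s) :
    g ((Fintype.card κ : ℝ)⁻¹ • ∑ k, x k) ≤ (Fintype.card κ : ℝ)⁻¹ * ∑ k, g (x k) := by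
  have hweights : ∑ _k : κ, (Fintype.card κ : ℝ)⁻¹ = 1 := by simp
  simpa only [Finset.smul_sum, smul_eq_mul, Finset.mul_sum] using
    hg.map_sum_le (fun _ _ => by positivity) hweights (fun k _ => hx k)

theorem average_sub_average_eq_average_average {E : Type*} [AddCommGroup E] [Module ℝ E]
    {ι : Type*} [Fintype ι] [Nonempty ι] (p m : ι → E) :
    (Fintype.card ι : ℝ)⁻¹ • ∑ i, p i - (Fintype.card ι : ℝ)⁻¹ • ∑ j, m j =
      (Fintype.card ι : ℝ)⁻¹ • ∑ i, (Fintype.card ι : ℝ)⁻¹ • ∑ j, (p i - m j) := by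
  have hn : (Fintype.card ι : ℝ) ≠ 0 := by positivity
  simp only [Finset.sum_sub_distrib, Finset.sum_const, Finset.card_univ, smul_sub,
    ← Nat.cast_smul_eq_nsmul ℝ, smul_smul, mul_inv_cancel₀ hn, inv_mul_cancel₀ hn, one_smul,
    Finset.smul_sum]

theorem ConvexOn.map_inner_average_sub_average_le {E : Type*} [NormedAddCommGroup E]
    [InnerProductSpace ℝ E] {ℓ : ℝ → ℝ} (hℓ : ConvexOn ℝ Set.univ ℓ)
    {ι : Type*} [Fintype ι] [Nonempty ι] (v : E) (p m : ι → E) :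
    ℓ (inner ℝ v ((Fintype.card ι : ℝ)⁻¹ • ∑ i, p i - (Fintype.card ι : ℝ)⁻¹ • ∑ i, m i)) ≤
      ((Fintype.card ι : ℝ) ^ 2)⁻¹ * ∑ i, ∑ j, ℓ (inner ℝ v (p i - m j)) := by
  set n : ℝ := (Fintype.card ι : ℝ)
  have hg : ConvexOn ℝ Set.univ fun w : E => ℓ (inner ℝ v w) :=
    hℓ.comp_linearMap (innerₗ E v)
  rw [average_sub_average_eq_average_average]
  calc ℓ (inner ℝ v (n⁻¹ • ∑ i, n⁻¹ • ∑ j, (p i - m j)))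
      ≤ n⁻¹ * ∑ i, ℓ (inner ℝ v (n⁻¹ • ∑ j, (p i - m j))) :=
        hg.map_fintype_average_le fun _ => Set.mem_univ _
    _ ≤ n⁻¹ * ∑ i, n⁻¹ * ∑ j, ℓ (inner ℝ v (p i - m j)) := by
        gcongr with i
        exact hg.map_fintype_average_le fun _ => Set.mem_univ _
    _ = (n ^ 2)⁻¹ * ∑ i, ∑ j, ℓ (inner ℝ v (p i - m j)) := by
        rw [← Finset.mul_sum, ← mul_assoc, ← mul_inv, sq]

theorem stmt15_general {X : Type*} [MeasurableSpace X] {C : Type*} [Fintype C] {d : ℕ}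
    (b : ℕ) (hb : 0 < b)
    (ρ : C → ℝ) (hρ0 : ∀ c, 0 ≤ ρ c)
    (f : X → EuclideanSpace ℝ (Fin d))
    (ℓ : ℝ → ℝ) (hconv : ConvexOn ℝ Set.univ ℓ)
    -- joint distribution of (x, (x₁⁺,…,x_b⁺), (x₁⁻,…,x_b⁻)) given the classes (cp, cm)
    (ν : C → C → Measure (X × (Fin b → X) × (Fin b → X)))
    (hInt1 : ∀ cp cm, Integrable (fun z =>
      ℓ (inner ℝ (f z.1) ((b : ℝ)⁻¹ • ∑ i, f (z.2.1 i) - (b : ℝ)⁻¹ • ∑ i, f (z.2.2 i)) : ℝ)) (ν cp cm))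
    (hInt2 : ∀ cp cm, ∀ i j : Fin b, Integrable (fun z =>
      ℓ (inner ℝ (f z.1) (f (z.2.1 i) - f (z.2.2 j)) : ℝ)) (ν cp cm)) :
    (∑ cp, ∑ cm, ρ cp * ρ cm * ∫ z,
        ℓ (inner ℝ (f z.1) ((b : ℝ)⁻¹ • ∑ i, f (z.2.1 i) - (b : ℝ)⁻¹ • ∑ i, f (z.2.2 i)) : ℝ) ∂(ν cp cm)) ≤
      ∑ cp, ∑ cm, ρ cp * ρ cm * ∫ z,
        ((b : ℝ) ^ 2)⁻¹ * ∑ i, ∑ j, ℓ (inner ℝ (f z.1) (f (z.2.1 i) - f (z.2.2 j)) : ℝ) ∂(ν cp cm) := by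
  have : Nonempty (Fin b) := ⟨⟨0, hb⟩⟩
  gcongr with cp _ cm _
  case ha => exact mul_nonneg (hρ0 cp) (hρ0 cm)
  case hf => exact hInt1 cp cm
  case hg =>
    exact (integrable_finsetSum _ fun i _ =>
      integrable_finsetSum _ fun j _ => hInt2 cp cm i j).const_mul _
  case h =>
    intro z
    simpa only [Fintype.card_fin] using
      hconv.map_inner_average_sub_average_le (f z.1) (fun i => f (z.2.1 i)) (fun i => f (z.2.2 i))

/-- Block loss lower bound (Jensen): the block contrastive loss is at most the
contrastive loss, for a convex loss `ℓ`. -/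
theorem stmt15 {X : Type*} [MeasurableSpace X] {C : Type*} [Fintype C] {d : ℕ}
    (b : ℕ) (hb : 0 < b)
    (ρ : C → ℝ) (hρ0 : ∀ c, 0 ≤ ρ c) (hρ1 : ∑ c, ρ c = 1)
    (D : C → Measure X) (hD : ∀ c, IsProbabilityMeasure (D c))
    (f : X → EuclideanSpace ℝ (Fin d))
    (ℓ : ℝ → ℝ) (hconv : ConvexOn ℝ Set.univ ℓ)
    -- joint distribution of (x, (x₁⁺,…,x_b⁺), (x₁⁻,…,x_b⁻)) given the classes (cp, cm)
    (ν : C → C → Measure (X × (Fin b → X) × (Fin b → X)))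
    (hν : ∀ cp cm, ν cp cm =
      (D cp).prod ((Measure.pi fun _ => D cp).prod (Measure.pi fun _ => D cm)))
    (hInt1 : ∀ cp cm, Integrable (fun z =>
      ℓ (inner ℝ (f z.1) ((b : ℝ)⁻¹ • ∑ i, f (z.2.1 i) - (b : ℝ)⁻¹ • ∑ i, f (z.2.2 i)) : ℝ)) (ν cp cm))
    (hInt2 : ∀ cp cm, ∀ i j : Fin b, Integrable (fun z =>
      ℓ (inner ℝ (f z.1) (f (z.2.1 i) - f (z.2.2 j)) : ℝ)) (ν cp cm)) :
    (∑ cp, ∑ cm, ρ cp * ρ cm * ∫ z,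
        ℓ (inner ℝ (f z.1) ((b : ℝ)⁻¹ • ∑ i, f (z.2.1 i) - (b : ℝ)⁻¹ • ∑ i, f (z.2.2 i)) : ℝ) ∂(ν cp cm)) ≤
      ∑ cp, ∑ cm, ρ cp * ρ cm * ∫ z,
        ((b : ℝ) ^ 2)⁻¹ * ∑ i, ∑ j, ℓ (inner ℝ (f z.1) (f (z.2.1 i) - f (z.2.2 j)) : ℝ) ∂(ν cp cm) :=
  stmt15_general b hb ρ hρ0 f ℓ hconv ν hInt1 hInt2
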